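/- arXiv:1610.02638 — 2 statements merged into one kernel-verified Lean document; each statement's English description precedes it below -/
import Mathlib

section
/- For pairwise distinct i, j, k, l ∈ {1,…,n}, the operators built from the Dunkl Casimir operators satisfy the generalized Racah relation [P_{kl}, F_{ijk}] = P_{ik} P_{jl} − P_{il} P_{jk} as operators on ℝ[x_1,…,x_n]. -/
open MvPolynomial Finset

noncomputable section

variable {n : ℕ}

/-- Reflection operator `r_i`. -/
def reflOp (i : Fin n) : Module.End ℝ (MvPolynomial (Fin n) ℝ) :=
  (MvPolynomial.aeval (fun j : Fin n => if j = i then -X i else X j)).toLinearMap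

/-- Division by the variable `x_i` (as a linear operator, discarding non-divisible terms). -/
def divXop (i : Fin n) : Module.End ℝ (MvPolynomial (Fin n) ℝ) where
  toFun p := p.divMonomial (Finsupp.single i 1)
  map_add' p q := by ext m; simp [coeff_divMonomial]
  map_smul' c p := by ext m; simp [coeff_divMonomial]

/-- The `i`-th `Z_2^n` Dunkl operator `T_i = ∂_i + μ_i x_i⁻¹ (1 - r_i)`. -/
def dunklT (μ : Fin n → ℝ) (i : Fin n) : Module.End ℝ (MvPolynomial (Fin n) ℝ) :=
  (pderiv i).toLinearMap + μ i • (divXop i * (1 - reflOp i))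

/-- The intermediate Laplace–Dunkl operator `Δ_A = Σ_{i∈A} T_i²`. -/
def lapD (μ : Fin n → ℝ) (A : Finset (Fin n)) : Module.End ℝ (MvPolynomial (Fin n) ℝ) :=
  ∑ i ∈ A, dunklT μ i ^ 2

/-- Multiplication by `‖x_A‖² = Σ_{i∈A} x_i²`. -/
def mulX2 (A : Finset (Fin n)) : Module.End ℝ (MvPolynomial (Fin n) ℝ) :=
  LinearMap.mulLeft ℝ (∑ i ∈ A, X i ^ 2)

/-- The Euler operator `E_A = Σ_{i∈A} x_i ∂_i`. -/
def eulerOp (A : Finset (Fin n)) : Module.End ℝ (MvPolynomial (Fin n) ℝ) :=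
  ∑ i ∈ A, LinearMap.mulLeft ℝ (X i) * (pderiv i).toLinearMap

/-- `γ_A = |A|/2 + Σ_{i∈A} μ_i`. -/
def gamA (μ : Fin n → ℝ) (A : Finset (Fin n)) : ℝ :=
  (A.card : ℝ) / 2 + ∑ i ∈ A, μ i

/-- The Casimir operator `C_A`. -/
def casOp (μ : Fin n → ℝ) (A : Finset (Fin n)) : Module.End ℝ (MvPolynomial (Fin n) ℝ) :=
  (1 / 4 : ℝ) • ((eulerOp A + gamA μ A • 1) ^ 2 - (2 : ℝ) • (eulerOp A + gamA μ A • 1)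
    - mulX2 A * lapD μ A)

end


noncomputable section

variable {n : ℕ}

/-- `P_{ij} = C_{ij} − C_i − C_j`. -/
def pOp (μ : Fin n → ℝ) (i j : Fin n) : Module.End ℝ (MvPolynomial (Fin n) ℝ) :=
  casOp μ {i, j} - casOp μ {i} - casOp μ {j}

/-- `F_{ijk} = ½ [P_{ij}, P_{jk}]`. -/
def fOp (μ : Fin n → ℝ) (i j k : Fin n) : Module.End ℝ (MvPolynomial (Fin n) ℝ) :=
  (1 / 2 : ℝ) • (pOp μ i j * pOp μ j k - pOp μ j k * pOp μ i j)

end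



noncomputable section
open MvPolynomial Finset
variable {n : ℕ}
attribute [local instance] LieRing.ofAssociativeRing

lemma endExt {f g : Module.End ℝ (MvPolynomial (Fin n) ℝ)}
    (h : ∀ (m : Fin n →₀ ℕ) (r : ℝ), f (monomial m r) = g (monomial m r)) : f = g := by
  apply LinearMap.ext
  intro p
  induction p using MvPolynomial.induction_on' with
  | monomial m r => exact h m r
  | add p q hp hq => simp [map_add, hp, hq]

lemma reflOp_monomial (i : Fin n) (m : Fin n →₀ ℕ) (r : ℝ) :
    reflOp i (monomial m r) = ((-1:ℝ)^(m i)) • monomial m r := by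
  rw [reflOp]
  simp only [AlgHom.toLinearMap_apply, aeval_monomial]
  have key : (m.prod fun j k => (if j = i then -X i else X j : MvPolynomial (Fin n) ℝ) ^ k)
      = ((-1:MvPolynomial (Fin n) ℝ)^(m i)) * m.prod fun j k => (X j : MvPolynomial (Fin n) ℝ) ^ k := by
    rw [Finsupp.prod, Finsupp.prod]
    have h1 : ∀ j ∈ m.support, (if j = i then -X i else X j : MvPolynomial (Fin n) ℝ) ^ m j
        = (if j = i then (-1:MvPolynomial (Fin n) ℝ)^(m j) else 1) * (X j)^ m j := by
      intro j _
      by_cases hj : j = i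
      · subst hj
        rw [if_pos rfl, if_pos rfl, show (-X j : MvPolynomial (Fin n) ℝ) = (-1) * X j by ring, mul_pow]
      · rw [if_neg hj, if_neg hj, one_mul]
    rw [Finset.prod_congr rfl h1, Finset.prod_mul_distrib]
    congr 1
    rw [Finset.prod_ite_eq' m.support i (fun j => (-1:MvPolynomial (Fin n) ℝ)^(m j))]
    by_cases hi : i ∈ m.support
    · simp [hi]
    · simp [hi, Finsupp.notMem_support_iff.mp hi]
  rw [key, smul_monomial, monomial_eq, algebraMap_eq, smul_eq_mul]
  simp only [map_mul, map_pow, map_neg, map_one]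
  ring

/-- coefficient function of the Dunkl operator on monomials -/
def cf (t : ℝ) (a : ℕ) : ℝ := a + t * (1 - (-1)^a)

lemma cf_zero (t : ℝ) : cf t 0 = 0 := by simp [cf]

lemma divXop_monomial (i : Fin n) (m : Fin n →₀ ℕ) (r : ℝ) (h : 1 ≤ m i) :
    divXop i (monomial m r) = monomial (m - Finsupp.single i 1) r := by
  apply MvPolynomial.ext
  intro s'
  show coeff s' ((monomial m r).divMonomial (Finsupp.single i 1)) = _
  rw [coeff_divMonomial, coeff_monomial, coeff_monomial]
  congr 1
  simp only [eq_iff_iff]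
  constructor
  · rintro rfl; rw [add_tsub_cancel_left]
  · rintro rfl
    rw [add_tsub_cancel_of_le]
    exact Finsupp.single_le_iff.mpr h

lemma mi_zero_sub (i : Fin n) (m : Fin n →₀ ℕ) (h : m i = 0) :
    m - Finsupp.single i 1 = m := by
  ext w
  rw [Finsupp.tsub_apply, Finsupp.single_apply]
  by_cases hw : i = w
  · subst hw; simp [h]
  · simp [hw]

lemma dunklT_monomial (μ : Fin n → ℝ) (i : Fin n) (m : Fin n →₀ ℕ) (r : ℝ) :
    dunklT μ i (monomial m r) = monomial (m - Finsupp.single i 1) (cf (μ i) (m i) * r) := by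
  rw [dunklT]
  simp only [LinearMap.add_apply, LinearMap.smul_apply, Module.End.mul_apply, LinearMap.sub_apply,
    Module.End.one_apply, Derivation.coeFn_coe]
  rw [pderiv_monomial, reflOp_monomial]
  by_cases h0 : m i = 0
  · rw [h0]
    simp only [pow_zero, one_smul, sub_self, map_zero, smul_zero, cf_zero, zero_mul,
      Nat.cast_zero, mul_zero, monomial_zero, add_zero]
  · have h1 : 1 ≤ m i := Nat.one_le_iff_ne_zero.mpr h0
    rw [show (monomial m) r - (-1:ℝ) ^ m i • (monomial m) r
        = (1 - (-1:ℝ)^ m i) • monomial m r by rw [sub_smul, one_smul]]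
    rw [map_smul, divXop_monomial i m r h1, smul_smul, smul_monomial]
    rw [← map_add]
    congr 1
    rw [cf, smul_eq_mul]
    ring

def opA (u : Fin n) : Module.End ℝ (MvPolynomial (Fin n) ℝ) := mulX2 {u}
def opB (μ : Fin n → ℝ) (u : Fin n) : Module.End ℝ (MvPolynomial (Fin n) ℝ) := lapD μ {u}
def opG (μ : Fin n → ℝ) (u : Fin n) : Module.End ℝ (MvPolynomial (Fin n) ℝ) :=
  eulerOp {u} + gamA μ {u} • 1

lemma gam_single (μ : Fin n → ℝ) (u : Fin n) : gamA μ {u} = 1/2 + μ u := by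
  rw [gamA]; simp

lemma opA_monomial (u : Fin n) (m : Fin n →₀ ℕ) (r : ℝ) :
    opA u (monomial m r) = monomial (Finsupp.single u 2 + m) r := by
  rw [opA, mulX2, Finset.sum_singleton]
  show X u ^ 2 * monomial m r = _
  rw [X_pow_eq_monomial, monomial_mul, one_mul]

lemma opB_monomial (μ : Fin n → ℝ) (u : Fin n) (m : Fin n →₀ ℕ) (r : ℝ) :
    opB μ u (monomial m r)
      = monomial (m - Finsupp.single u 2) (cf (μ u) (m u - 1) * (cf (μ u) (m u) * r)) := by
  rw [opB, lapD, Finset.sum_singleton, pow_two]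
  show dunklT μ u (dunklT μ u (monomial m r)) = _
  rw [dunklT_monomial, dunklT_monomial]
  congr 1
  · rw [tsub_tsub, ← Finsupp.single_add]
  · congr 2
    rw [Finsupp.tsub_apply, Finsupp.single_eq_same]

lemma eulerOp_monomial (u : Fin n) (m : Fin n →₀ ℕ) (r : ℝ) :
    eulerOp {u} (monomial m r) = monomial m ((m u : ℝ) * r) := by
  rw [eulerOp, Finset.sum_singleton]
  show X u * (pderiv u) (monomial m r) = _
  rw [pderiv_monomial]
  by_cases h0 : m u = 0
  · rw [h0]; simp
  · rw [show (X u : MvPolynomial (Fin n) ℝ) = monomial (Finsupp.single u 1) 1 from rfl,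
      monomial_mul, one_mul]
    congr 1
    · rw [add_tsub_cancel_of_le (Finsupp.single_le_iff.mpr (Nat.one_le_iff_ne_zero.mpr h0))]
    · ring
lemma opG_monomial (μ : Fin n → ℝ) (u : Fin n) (m : Fin n →₀ ℕ) (r : ℝ) :
    opG μ u (monomial m r) = monomial m (((m u : ℝ) + gamA μ {u}) * r) := by
  rw [opG, LinearMap.add_apply, eulerOp_monomial, LinearMap.smul_apply, Module.End.one_apply,
    smul_monomial, ← map_add]
  congr 1
  rw [smul_eq_mul]
  ring

lemma cf_key (t : ℝ) (a : ℕ) :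
    cf t (a+1) * cf t (a+2) = cf t (a-1) * cf t a + 4*((a:ℝ) + (1/2 + t)) := by
  rcases a with _ | _ | a
  · norm_num [cf]; ring
  · norm_num [cf, pow_succ]; ring
  · have h3 : (a + 2 : ℕ) - 1 = a + 1 := rfl
    rw [h3]
    rcases Nat.even_or_odd a with h | h
    · have h1 : (-1:ℝ)^a = 1 := h.neg_one_pow
      simp only [cf, pow_add, h1, one_mul]
      push_cast
      norm_num
      ring
    · have h1 : (-1:ℝ)^a = -1 := h.neg_one_pow
      simp only [cf, pow_add, h1]
      push_cast
      norm_num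
      ring

lemma single_add_apply_ne {u v : Fin n} (h : u ≠ v) (k : ℕ) (m : Fin n →₀ ℕ) :
    (Finsupp.single u k + m) v = m v := by
  rw [Finsupp.add_apply, Finsupp.single_apply, if_neg h, zero_add]

lemma sub_single_apply_ne {u v : Fin n} (h : u ≠ v) (k : ℕ) (m : Fin n →₀ ℕ) :
    (m - Finsupp.single u k) v = m v := by
  rw [Finsupp.tsub_apply, Finsupp.single_apply, if_neg h, Nat.sub_zero]

lemma relBA (μ : Fin n → ℝ) (u : Fin n) :
    opB μ u * opA u = opA u * opB μ u + (4:ℝ) • opG μ u := by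
  apply endExt; intro m r
  simp only [Module.End.mul_apply, LinearMap.add_apply, LinearMap.smul_apply]
  rw [opA_monomial, opB_monomial, opB_monomial, opA_monomial, opG_monomial,
    add_tsub_cancel_left, smul_monomial]
  have h2 : ((Finsupp.single u 2 + m : Fin n →₀ ℕ) u) = m u + 2 := by
    rw [Finsupp.add_apply, Finsupp.single_eq_same]; omega
  rw [h2, show m u + 2 - 1 = m u + 1 from rfl]
  have hswap : (monomial (Finsupp.single u 2 + (m - Finsupp.single u 2))
        (cf (μ u) (m u - 1) * (cf (μ u) (m u) * r)) : MvPolynomial (Fin n) ℝ)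
      = monomial m (cf (μ u) (m u - 1) * (cf (μ u) (m u) * r)) := by
    rcases hmu : m u with _ | _ | a
    · simp [cf_zero]
    · simp [cf_zero]
    · congr 1
      rw [add_tsub_cancel_of_le]
      rw [Finsupp.single_le_iff, hmu]; omega
  rw [hswap, ← map_add]
  congr 1
  rw [gam_single, smul_eq_mul]
  linear_combination r * cf_key (μ u) (m u)

lemma relGA (μ : Fin n → ℝ) (u : Fin n) :
    opG μ u * opA u = opA u * opG μ u + (2:ℝ) • opA u := by
  apply endExt; intro m r
  simp only [Module.End.mul_apply, LinearMap.add_apply, LinearMap.smul_apply]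
  rw [opA_monomial, opG_monomial, opG_monomial, opA_monomial, smul_monomial,
    ← map_add]
  congr 1
  have h2 : ((Finsupp.single u 2 + m : Fin n →₀ ℕ) u) = m u + 2 := by
    rw [Finsupp.add_apply, Finsupp.single_eq_same]; omega
  rw [h2]
  push_cast [smul_eq_mul]
  ring

lemma relGB (μ : Fin n → ℝ) (u : Fin n) :
    opG μ u * opB μ u = opB μ u * opG μ u - (2:ℝ) • opB μ u := by
  apply endExt; intro m r
  simp only [Module.End.mul_apply, LinearMap.sub_apply, LinearMap.smul_apply]
  rw [opB_monomial, opG_monomial, opG_monomial, opB_monomial, smul_monomial,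
    ← map_sub]
  congr 1
  rcases hmu : m u with _ | _ | a
  · simp [cf_zero]
  · simp [cf_zero]
  · have h2 : ((m - Finsupp.single u 2 : Fin n →₀ ℕ) u) = a := by
      rw [Finsupp.tsub_apply, Finsupp.single_eq_same, hmu]; omega
    rw [h2]
    push_cast [smul_eq_mul]
    ring

lemma mixAB_index {u v : Fin n} (h : u ≠ v) (m : Fin n →₀ ℕ) :
    Finsupp.single u 2 + (m - Finsupp.single v 2) = (Finsupp.single u 2 + m) - Finsupp.single v 2 := by
  ext w
  simp only [Finsupp.add_apply, Finsupp.tsub_apply, Finsupp.single_apply]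
  split_ifs with h1 h2
  · exact absurd (h1.trans h2.symm) h
  · omega
  · omega
  · omega

lemma commAA (u v : Fin n) : opA u * opA v = opA v * opA u := by
  apply endExt; intro m r
  simp only [Module.End.mul_apply]
  rw [opA_monomial, opA_monomial, opA_monomial, opA_monomial, add_left_comm]

lemma commGG (μ : Fin n → ℝ) (u v : Fin n) : opG μ u * opG μ v = opG μ v * opG μ u := by
  apply endExt; intro m r
  simp only [Module.End.mul_apply]
  rw [opG_monomial, opG_monomial, opG_monomial, opG_monomial]
  congr 1; ring

lemma commGA (μ : Fin n → ℝ) {u v : Fin n} (h : u ≠ v) : opG μ u * opA v = opA v * opG μ u := by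
  apply endExt; intro m r
  simp only [Module.End.mul_apply]
  rw [opA_monomial, opG_monomial, opG_monomial, opA_monomial,
    single_add_apply_ne (Ne.symm h)]

lemma commGB (μ : Fin n → ℝ) {u v : Fin n} (h : u ≠ v) :
    opG μ u * opB μ v = opB μ v * opG μ u := by
  apply endExt; intro m r
  simp only [Module.End.mul_apply]
  rw [opB_monomial, opG_monomial, opG_monomial, opB_monomial,
    sub_single_apply_ne (Ne.symm h)]
  congr 1; ring

lemma commAB (μ : Fin n → ℝ) {u v : Fin n} (h : u ≠ v) :
    opA u * opB μ v = opB μ v * opA u := by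
  apply endExt; intro m r
  simp only [Module.End.mul_apply]
  rw [opB_monomial, opA_monomial, opA_monomial, opB_monomial,
    single_add_apply_ne h, mixAB_index h]

lemma commBB (μ : Fin n → ℝ) {u v : Fin n} (h : u ≠ v) :
    opB μ u * opB μ v = opB μ v * opB μ u := by
  apply endExt; intro m r
  simp only [Module.End.mul_apply]
  rw [opB_monomial, opB_monomial, opB_monomial, opB_monomial,
    sub_single_apply_ne (Ne.symm h), sub_single_apply_ne h,
    tsub_tsub, tsub_tsub, add_comm (Finsupp.single v 2)]
  congr 1; ring

lemma lie_mul' {R : Type*} [Ring R] (x y z : R) : ⁅x, y*z⁆ = ⁅x,y⁆*z + y*⁅x,z⁆ := by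
  simp only [Ring.lie_def]; noncomm_ring

lemma mul_lie' {R : Type*} [Ring R] (x y z : R) : ⁅x*y, z⁆ = x*⁅y,z⁆ + ⁅x,z⁆*y := by
  simp only [Ring.lie_def]; noncomm_ring

lemma smul_lie' {R : Type*} [Ring R] [Algebra ℝ R] (c : ℝ) (x y : R) :
    ⁅c • x, y⁆ = c • ⁅x, y⁆ := by
  simp [Ring.lie_def, smul_mul_assoc, mul_smul_comm, smul_sub]

lemma swap_right {R : Type*} [Semiring R] {x y : R} (h : x*y = y*x) (z : R) :
    x*(y*z) = y*(x*z) := by rw [← mul_assoc, h, mul_assoc]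

def opP (μ : Fin n → ℝ) (u v : Fin n) : Module.End ℝ (MvPolynomial (Fin n) ℝ) :=
  opG μ u * opG μ v + opG μ v * opG μ u - opA u * opB μ v - opA v * opB μ u

lemma cGG (μ : Fin n → ℝ) (u v : Fin n) : Commute (opG μ u) (opG μ v) := commGG μ u v
lemma cAA (u v : Fin n) : Commute (opA u) (opA v) := commAA u v
lemma cGA (μ : Fin n → ℝ) {u v : Fin n} (h : u ≠ v) : Commute (opG μ u) (opA v) := commGA μ h
lemma cGB (μ : Fin n → ℝ) {u v : Fin n} (h : u ≠ v) : Commute (opG μ u) (opB μ v) := commGB μ h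
lemma cAB (μ : Fin n → ℝ) {u v : Fin n} (h : u ≠ v) : Commute (opA u) (opB μ v) := commAB μ h
lemma cBB (μ : Fin n → ℝ) {u v : Fin n} (h : u ≠ v) : Commute (opB μ u) (opB μ v) := commBB μ h

lemma cG_P (μ : Fin n → ℝ) {t u v : Fin n} (h1 : t ≠ u) (h2 : t ≠ v) :
    Commute (opG μ t) (opP μ u v) := by
  unfold opP
  refine ((Commute.add_right ?_ ?_).sub_right ?_).sub_right ?_
  · exact (cGG μ t u).mul_right (cGG μ t v)
  · exact (cGG μ t v).mul_right (cGG μ t u)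
  · exact (cGA μ h1).mul_right (cGB μ h2)
  · exact (cGA μ h2).mul_right (cGB μ h1)

lemma cA_P (μ : Fin n → ℝ) {t u v : Fin n} (h1 : t ≠ u) (h2 : t ≠ v) :
    Commute (opA t) (opP μ u v) := by
  unfold opP
  refine ((Commute.add_right ?_ ?_).sub_right ?_).sub_right ?_
  · exact (cGA μ h1.symm).symm.mul_right (cGA μ h2.symm).symm
  · exact (cGA μ h2.symm).symm.mul_right (cGA μ h1.symm).symm
  · exact (cAA t u).mul_right (cAB μ h2)
  · exact (cAA t v).mul_right (cAB μ h1)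

lemma cB_P (μ : Fin n → ℝ) {t u v : Fin n} (h1 : t ≠ u) (h2 : t ≠ v) :
    Commute (opB μ t) (opP μ u v) := by
  unfold opP
  refine ((Commute.add_right ?_ ?_).sub_right ?_).sub_right ?_
  · exact (cGB μ h1.symm).symm.mul_right (cGB μ h2.symm).symm
  · exact (cGB μ h2.symm).symm.mul_right (cGB μ h1.symm).symm
  · exact (cAB μ h1.symm).symm.mul_right (cBB μ h2)
  · exact (cAB μ h2.symm).symm.mul_right (cBB μ h1)

lemma cP_P (μ : Fin n → ℝ) {t s u v : Fin n} (h1 : t ≠ u) (h2 : t ≠ v) (h3 : s ≠ u) (h4 : s ≠ v) :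
    Commute (opP μ t s) (opP μ u v) := by
  have hGt := cG_P μ h1 h2
  have hGs := cG_P μ h3 h4
  have hAt := cA_P μ h1 h2
  have hAs := cA_P μ h3 h4
  have hBt := cB_P μ h1 h2
  have hBs := cB_P μ h3 h4
  show Commute (opG μ t * opG μ s + opG μ s * opG μ t - opA t * opB μ s - opA s * opB μ t) _
  refine ((Commute.add_left ?_ ?_).sub_left ?_).sub_left ?_
  · exact hGt.mul_left hGs
  · exact hGs.mul_left hGt
  · exact hAt.mul_left hBs
  · exact hAs.mul_left hBt

lemma lieBA (μ : Fin n → ℝ) (u : Fin n) : ⁅opB μ u, opA u⁆ = (4:ℝ) • opG μ u := by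
  rw [Ring.lie_def, relBA]; abel

lemma lieGA (μ : Fin n → ℝ) (u : Fin n) : ⁅opG μ u, opA u⁆ = (2:ℝ) • opA u := by
  rw [Ring.lie_def, relGA]; abel

lemma lieGB (μ : Fin n → ℝ) (u : Fin n) : ⁅opG μ u, opB μ u⁆ = (-2:ℝ) • opB μ u := by
  rw [Ring.lie_def, relGB]; match_scalars <;> ring

lemma lieAB (μ : Fin n → ℝ) (u : Fin n) : ⁅opA u, opB μ u⁆ = (-4:ℝ) • opG μ u := by
  rw [← lie_skew, lieBA]; match_scalars <;> ring

lemma lieBG (μ : Fin n → ℝ) (u : Fin n) : ⁅opB μ u, opG μ u⁆ = (2:ℝ) • opB μ u := by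
  rw [← lie_skew, lieGB]; match_scalars <;> ring

lemma lieAG (μ : Fin n → ℝ) (u : Fin n) : ⁅opA u, opG μ u⁆ = (-2:ℝ) • opA u := by
  rw [← lie_skew, lieGA]; match_scalars <;> ring

-- L1
lemma lieG_P (μ : Fin n → ℝ) {u v : Fin n} (h : u ≠ v) :
    ⁅opG μ u, opP μ u v⁆ = (2:ℝ) • (opA v * opB μ u) - (2:ℝ) • (opA u * opB μ v) := by
  rw [opP, lie_sub, lie_sub, lie_add, lie_mul', lie_mul', lie_mul', lie_mul']
  rw [lie_self, (cGG μ u v).lie_eq, (cGA μ h).lie_eq, (cGB μ h).lie_eq,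
    lieGA, lieGB]
  simp only [zero_mul, mul_zero, add_zero, zero_add, smul_mul_assoc, mul_smul_comm]
  match_scalars <;> ring

-- L2
lemma lieB_P (μ : Fin n → ℝ) {u v : Fin n} (h : u ≠ v) :
    ⁅opB μ u, opP μ u v⁆ = (4:ℝ) • (opB μ u * opG μ v) - (4:ℝ) • (opG μ u * opB μ v) := by
  rw [opP, lie_sub, lie_sub, lie_add, lie_mul', lie_mul', lie_mul', lie_mul']
  rw [lieBG, (cGB μ (Ne.symm h)).symm.lie_eq, (cAB μ (Ne.symm h)).symm.lie_eq,
    (cBB μ h).lie_eq, lieBA, lie_self]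
  simp only [zero_mul, mul_zero, add_zero, zero_add, smul_mul_assoc, mul_smul_comm]
  rw [commGB μ (Ne.symm h)]
  match_scalars <;> ring

-- L3
lemma lieA_P (μ : Fin n → ℝ) {u v : Fin n} (h : u ≠ v) :
    ⁅opA u, opP μ u v⁆ = (4:ℝ) • (opA v * opG μ u) - (4:ℝ) • (opA u * opG μ v) := by
  rw [opP, lie_sub, lie_sub, lie_add, lie_mul', lie_mul', lie_mul', lie_mul']
  rw [lieAG, (cGA μ (Ne.symm h)).symm.lie_eq, lie_self, (cAA u v).lie_eq,
    (cAB μ h).lie_eq, lieAB]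
  simp only [zero_mul, mul_zero, add_zero, zero_add, smul_mul_assoc, mul_smul_comm]
  rw [commGA μ (Ne.symm h)]
  match_scalars <;> ring

section MainLemmas
variable (μ : Fin n → ℝ) {u v w : Fin n}

lemma lemA (huv : u ≠ v) (huw : u ≠ w) (hvw : v ≠ w) :
    ⁅opG μ u, ⁅opP μ u v, opP μ v w⁆⁆
      = (8:ℝ) • (opG μ w * opP μ u v) - (8:ℝ) • (opG μ v * opP μ u w) := by
  rw [leibniz_lie, (cG_P μ huv huw).lie_eq, lie_zero, add_zero, lieG_P μ huv, sub_lie,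
    smul_lie (2:ℝ) (opA v * opB μ u) (opP μ v w), smul_lie (2:ℝ) (opA u * opB μ v) (opP μ v w),
    mul_lie', mul_lie', (cB_P μ huv huw).lie_eq, (cA_P μ huv huw).lie_eq,
    lieA_P μ hvw, lieB_P μ hvw]
  simp only [opP, mul_add, add_mul, mul_sub, sub_mul, smul_mul_assoc, mul_smul_comm, smul_smul,
    mul_zero, zero_mul, add_zero, zero_add, mul_assoc,
    commAA v u,
    commGG μ v u,
    commBB μ (huv.symm),
    commAA w u,
    commGG μ w u,
    commBB μ (huw.symm),
    commAA w v,
    commGG μ w v,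
    commBB μ (hvw.symm),
    commGA μ (huv),
    commGB μ (huv),
    (commAB μ (huv.symm)).symm,
    commGA μ (huw),
    commGB μ (huw),
    (commAB μ (huw.symm)).symm,
    commGA μ (hvw),
    commGB μ (hvw),
    (commAB μ (hvw.symm)).symm,
    commGA μ (huv.symm),
    commGB μ (huv.symm),
    (commAB μ (huv)).symm,
    commGA μ (huw.symm),
    commGB μ (huw.symm),
    (commAB μ (huw)).symm,
    commGA μ (hvw.symm),
    commGB μ (hvw.symm),
    (commAB μ (hvw)).symm,
    swap_right (commAA v u),
    swap_right (commGG μ v u),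
    swap_right (commBB μ (huv.symm)),
    swap_right (commAA w u),
    swap_right (commGG μ w u),
    swap_right (commBB μ (huw.symm)),
    swap_right (commAA w v),
    swap_right (commGG μ w v),
    swap_right (commBB μ (hvw.symm)),
    swap_right (commGA μ (huv)),
    swap_right (commGB μ (huv)),
    swap_right ((commAB μ (huv.symm)).symm),
    swap_right (commGA μ (huw)),
    swap_right (commGB μ (huw)),
    swap_right ((commAB μ (huw.symm)).symm),
    swap_right (commGA μ (hvw)),
    swap_right (commGB μ (hvw)),
    swap_right ((commAB μ (hvw.symm)).symm),
    swap_right (commGA μ (huv.symm)),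
    swap_right (commGB μ (huv.symm)),
    swap_right ((commAB μ (huv)).symm),
    swap_right (commGA μ (huw.symm)),
    swap_right (commGB μ (huw.symm)),
    swap_right ((commAB μ (huw)).symm),
    swap_right (commGA μ (hvw.symm)),
    swap_right (commGB μ (hvw.symm)),
    swap_right ((commAB μ (hvw)).symm)]
  match_scalars <;> ring

lemma lemB (huv : u ≠ v) (huw : u ≠ w) (hvw : v ≠ w) :
    ⁅opB μ u, ⁅opP μ u v, opP μ v w⁆⁆
      = (8:ℝ) • (opB μ w * opP μ u v) - (8:ℝ) • (opB μ v * opP μ u w) := by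
  rw [leibniz_lie, (cB_P μ huv huw).lie_eq, lie_zero, add_zero, lieB_P μ huv, sub_lie,
    smul_lie (4:ℝ) (opB μ u * opG μ v) (opP μ v w), smul_lie (4:ℝ) (opG μ u * opB μ v) (opP μ v w),
    mul_lie', mul_lie', (cG_P μ huv huw).lie_eq, (cB_P μ huv huw).lie_eq,
    lieG_P μ hvw, lieB_P μ hvw]
  simp only [opP, mul_add, add_mul, mul_sub, sub_mul, smul_mul_assoc, mul_smul_comm, smul_smul,
    mul_zero, zero_mul, add_zero, zero_add, mul_assoc,
    commAA v u,
    commGG μ v u,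
    commBB μ (huv.symm),
    commAA w u,
    commGG μ w u,
    commBB μ (huw.symm),
    commAA w v,
    commGG μ w v,
    commBB μ (hvw.symm),
    commGA μ (huv),
    commGB μ (huv),
    (commAB μ (huv.symm)).symm,
    commGA μ (huw),
    commGB μ (huw),
    (commAB μ (huw.symm)).symm,
    commGA μ (hvw),
    commGB μ (hvw),
    (commAB μ (hvw.symm)).symm,
    commGA μ (huv.symm),
    commGB μ (huv.symm),
    (commAB μ (huv)).symm,
    commGA μ (huw.symm),
    commGB μ (huw.symm),
    (commAB μ (huw)).symm,
    commGA μ (hvw.symm),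
    commGB μ (hvw.symm),
    (commAB μ (hvw)).symm,
    swap_right (commAA v u),
    swap_right (commGG μ v u),
    swap_right (commBB μ (huv.symm)),
    swap_right (commAA w u),
    swap_right (commGG μ w u),
    swap_right (commBB μ (huw.symm)),
    swap_right (commAA w v),
    swap_right (commGG μ w v),
    swap_right (commBB μ (hvw.symm)),
    swap_right (commGA μ (huv)),
    swap_right (commGB μ (huv)),
    swap_right ((commAB μ (huv.symm)).symm),
    swap_right (commGA μ (huw)),
    swap_right (commGB μ (huw)),
    swap_right ((commAB μ (huw.symm)).symm),
    swap_right (commGA μ (hvw)),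
    swap_right (commGB μ (hvw)),
    swap_right ((commAB μ (hvw.symm)).symm),
    swap_right (commGA μ (huv.symm)),
    swap_right (commGB μ (huv.symm)),
    swap_right ((commAB μ (huv)).symm),
    swap_right (commGA μ (huw.symm)),
    swap_right (commGB μ (huw.symm)),
    swap_right ((commAB μ (huw)).symm),
    swap_right (commGA μ (hvw.symm)),
    swap_right (commGB μ (hvw.symm)),
    swap_right ((commAB μ (hvw)).symm)]
  match_scalars <;> ring

lemma lemC (huv : u ≠ v) (huw : u ≠ w) (hvw : v ≠ w) :
    ⁅opA u, ⁅opP μ u v, opP μ v w⁆⁆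
      = (8:ℝ) • (opA w * opP μ u v) - (8:ℝ) • (opA v * opP μ u w) := by
  rw [leibniz_lie, (cA_P μ huv huw).lie_eq, lie_zero, add_zero, lieA_P μ huv, sub_lie,
    smul_lie (4:ℝ) (opA v * opG μ u) (opP μ v w), smul_lie (4:ℝ) (opA u * opG μ v) (opP μ v w),
    mul_lie', mul_lie', (cG_P μ huv huw).lie_eq, (cA_P μ huv huw).lie_eq,
    lieA_P μ hvw, lieG_P μ hvw]
  simp only [opP, mul_add, add_mul, mul_sub, sub_mul, smul_mul_assoc, mul_smul_comm, smul_smul,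
    mul_zero, zero_mul, add_zero, zero_add, mul_assoc,
    commAA v u,
    commGG μ v u,
    commBB μ (huv.symm),
    commAA w u,
    commGG μ w u,
    commBB μ (huw.symm),
    commAA w v,
    commGG μ w v,
    commBB μ (hvw.symm),
    commGA μ (huv),
    commGB μ (huv),
    (commAB μ (huv.symm)).symm,
    commGA μ (huw),
    commGB μ (huw),
    (commAB μ (huw.symm)).symm,
    commGA μ (hvw),
    commGB μ (hvw),
    (commAB μ (hvw.symm)).symm,
    commGA μ (huv.symm),
    commGB μ (huv.symm),
    (commAB μ (huv)).symm,
    commGA μ (huw.symm),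
    commGB μ (huw.symm),
    (commAB μ (huw)).symm,
    commGA μ (hvw.symm),
    commGB μ (hvw.symm),
    (commAB μ (hvw)).symm,
    swap_right (commAA v u),
    swap_right (commGG μ v u),
    swap_right (commBB μ (huv.symm)),
    swap_right (commAA w u),
    swap_right (commGG μ w u),
    swap_right (commBB μ (huw.symm)),
    swap_right (commAA w v),
    swap_right (commGG μ w v),
    swap_right (commBB μ (hvw.symm)),
    swap_right (commGA μ (huv)),
    swap_right (commGB μ (huv)),
    swap_right ((commAB μ (huv.symm)).symm),
    swap_right (commGA μ (huw)),
    swap_right (commGB μ (huw)),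
    swap_right ((commAB μ (huw.symm)).symm),
    swap_right (commGA μ (hvw)),
    swap_right (commGB μ (hvw)),
    swap_right ((commAB μ (hvw.symm)).symm),
    swap_right (commGA μ (huv.symm)),
    swap_right (commGB μ (huv.symm)),
    swap_right ((commAB μ (huv)).symm),
    swap_right (commGA μ (huw.symm)),
    swap_right (commGB μ (huw.symm)),
    swap_right ((commAB μ (huw)).symm),
    swap_right (commGA μ (hvw.symm)),
    swap_right (commGB μ (hvw.symm)),
    swap_right ((commAB μ (hvw)).symm)]
  match_scalars <;> ring

end MainLemmas

lemma commute_lie {R : Type*} [Ring R] {x y z : R} (h1 : Commute x y) (h2 : Commute x z) :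
    ⁅x, ⁅y, z⁆⁆ = 0 := by
  rw [Ring.lie_def y z]
  exact ((h1.mul_right h2).sub_right (h2.mul_right h1)).lie_eq

lemma pOp_eq (μ : Fin n → ℝ) {u v : Fin n} (h : u ≠ v) :
    pOp μ u v = (1/4 : ℝ) • opP μ u v := by
  have he : eulerOp ({u, v} : Finset (Fin n)) = eulerOp {u} + eulerOp {v} := by
    rw [eulerOp, eulerOp, eulerOp, Finset.sum_pair h, Finset.sum_singleton, Finset.sum_singleton]
  have hx : mulX2 ({u, v} : Finset (Fin n)) = opA u + opA v := by
    rw [mulX2, Finset.sum_pair h]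
    rw [opA, opA, mulX2, mulX2, Finset.sum_singleton, Finset.sum_singleton]
    exact LinearMap.ext fun p => add_mul _ _ p
  have hl : lapD μ ({u, v} : Finset (Fin n)) = opB μ u + opB μ v := by
    rw [lapD, Finset.sum_pair h, opB, opB, lapD, lapD, Finset.sum_singleton,
      Finset.sum_singleton]
  have hg : gamA μ ({u, v} : Finset (Fin n)) = gamA μ {u} + gamA μ {v} := by
    rw [gamA, gamA, gamA, Finset.sum_pair h, Finset.card_pair h]
    simp
    ring
  have hgg : eulerOp ({u, v} : Finset (Fin n)) + gamA μ ({u, v} : Finset (Fin n)) • 1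
      = opG μ u + opG μ v := by
    rw [he, hg, opG, opG, add_smul]
    abel
  rw [pOp, casOp, casOp, casOp, hx, hl, hgg]
  rw [show eulerOp ({u} : Finset (Fin n)) + gamA μ {u} • 1 = opG μ u from rfl,
    show eulerOp ({v} : Finset (Fin n)) + gamA μ {v} • 1 = opG μ v from rfl,
    show mulX2 ({u} : Finset (Fin n)) = opA u from rfl,
    show mulX2 ({v} : Finset (Fin n)) = opA v from rfl,
    show lapD μ ({u} : Finset (Fin n)) = opB μ u from rfl,
    show lapD μ ({v} : Finset (Fin n)) = opB μ v from rfl,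
    opP]
  simp only [pow_two, mul_add, add_mul, mul_sub, sub_mul, smul_sub, smul_add]
  match_scalars <;> ring

lemma fOp_eq (μ : Fin n → ℝ) {i j k : Fin n} (hij : i ≠ j) (hjk : j ≠ k) :
    fOp μ i j k = (1/32 : ℝ) • ⁅opP μ i j, opP μ j k⁆ := by
  rw [fOp, pOp_eq μ hij, pOp_eq μ hjk, Ring.lie_def]
  simp only [smul_mul_assoc, mul_smul_comm, smul_smul, smul_sub]
  match_scalars <;> ring

lemma lemMain (μ : Fin n → ℝ) {i j k l : Fin n} (hij : i ≠ j) (hik : i ≠ k) (hil : i ≠ l)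
    (hjk : j ≠ k) (hjl : j ≠ l) (hkl : k ≠ l) :
    ⁅opP μ i j, ⁅opP μ j k, opP μ k l⁆⁆
      = (8:ℝ) • (opP μ i l * opP μ j k) - (8:ℝ) • (opP μ i k * opP μ j l) := by
  have hGi : ⁅opG μ i, ⁅opP μ j k, opP μ k l⁆⁆ = 0 :=
    commute_lie (cG_P μ hij hik) (cG_P μ hik hil)
  have hAi : ⁅opA i, ⁅opP μ j k, opP μ k l⁆⁆ = 0 :=
    commute_lie (cA_P μ hij hik) (cA_P μ hik hil)
  have hBi : ⁅opB μ i, ⁅opP μ j k, opP μ k l⁆⁆ = 0 :=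
    commute_lie (cB_P μ hij hik) (cB_P μ hik hil)
  rw [show opP μ i j = opG μ i * opG μ j + opG μ j * opG μ i - opA i * opB μ j - opA j * opB μ i
      from rfl]
  rw [sub_lie, sub_lie, add_lie, mul_lie', mul_lie', mul_lie', mul_lie']
  rw [hGi, hAi, hBi, lemA μ hjk hjl hkl, lemB μ hjk hjl hkl, lemC μ hjk hjl hkl]
  simp only [mul_add, add_mul, mul_sub, sub_mul, smul_mul_assoc, mul_smul_comm, smul_smul,
    mul_zero, zero_mul, add_zero, zero_add, mul_assoc,
    (cG_P μ hij hik).symm.eq, (cG_P μ hij hil).symm.eq,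
    (cB_P μ hij hik).symm.eq, (cB_P μ hij hil).symm.eq,
    swap_right ((cG_P μ hij hik).symm.eq), swap_right ((cG_P μ hij hil).symm.eq),
    swap_right ((cB_P μ hij hik).symm.eq), swap_right ((cB_P μ hij hil).symm.eq)]
  rw [show opP μ i l = opG μ i * opG μ l + opG μ l * opG μ i - opA i * opB μ l - opA l * opB μ i
      from rfl,
    show opP μ i k = opG μ i * opG μ k + opG μ k * opG μ i - opA i * opB μ k - opA k * opB μ i
      from rfl]
  simp only [mul_add, add_mul, mul_sub, sub_mul, mul_assoc]
  match_scalars <;> ring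

theorem racah_relation_PF'_aux {n : ℕ} (μ : Fin n → ℝ)
    (i j k l : Fin n) (hij : i ≠ j) (hik : i ≠ k) (hil : i ≠ l)
    (hjk : j ≠ k) (hjl : j ≠ l) (hkl : k ≠ l) :
    pOp μ k l * fOp μ i j k - fOp μ i j k * pOp μ k l =
      pOp μ i k * pOp μ j l - pOp μ i l * pOp μ j k := by
  have e32 : fOp μ i j k = (1/32:ℝ) • ⁅opP μ i j, opP μ j k⁆ := fOp_eq μ hij hjk
  have key : ⁅opP μ k l, ⁅opP μ i j, opP μ j k⁆⁆
      = (8:ℝ) • (opP μ i k * opP μ j l) - (8:ℝ) • (opP μ i l * opP μ j k) := by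
    rw [leibniz_lie, (cP_P μ (Ne.symm hik) (Ne.symm hjk) (Ne.symm hil) (Ne.symm hjl)).lie_eq,
      zero_lie, zero_add,
      show ⁅opP μ k l, opP μ j k⁆ = -⁅opP μ j k, opP μ k l⁆ from (lie_skew _ _).symm, lie_neg,
      lemMain μ hij hik hil hjk hjl hkl, neg_sub]
  have key2 : opP μ k l * ⁅opP μ i j, opP μ j k⁆ - ⁅opP μ i j, opP μ j k⁆ * opP μ k l
      = (8:ℝ) • (opP μ i k * opP μ j l) - (8:ℝ) • (opP μ i l * opP μ j k) := by
    rw [← Ring.lie_def]; exact key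
  have lhs_eq : pOp μ k l * fOp μ i j k - fOp μ i j k * pOp μ k l
      = (1/128 : ℝ) • (opP μ k l * ⁅opP μ i j, opP μ j k⁆
          - ⁅opP μ i j, opP μ j k⁆ * opP μ k l) := by
    rw [e32, pOp_eq μ hkl]
    simp only [smul_mul_assoc, mul_smul_comm, smul_smul, smul_sub]
    match_scalars <;> ring
  rw [lhs_eq, key2, pOp_eq μ hik, pOp_eq μ hjl, pOp_eq μ hil, pOp_eq μ hjk]
  simp only [smul_mul_assoc, mul_smul_comm, smul_smul, smul_sub]
  match_scalars <;> ring

end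

/-- `[P_{kl}, F_{ijk}] = P_{ik}P_{jl} − P_{il}P_{jk}`. -/
theorem racah_relation_PF' {n : ℕ} (hn : 1 ≤ n) (μ : Fin n → ℝ) (hμ : ∀ i, 0 < μ i)
    (i j k l : Fin n) (hij : i ≠ j) (hik : i ≠ k) (hil : i ≠ l)
    (hjk : j ≠ k) (hjl : j ≠ l) (hkl : k ≠ l) :
    pOp μ k l * fOp μ i j k - fOp μ i j k * pOp μ k l =
      pOp μ i k * pOp μ j l - pOp μ i l * pOp μ j k :=
  racah_relation_PF'_aux μ i j k l hij hik hil hjk hjl hkl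
end

section
/- (Cauchy–Kovalevskaia isomorphisms) For every k ≥ 0, the map CK⁰_{x_n} : P_k(ℝ^{n−1}) → ℝ[x_1,…,x_n] given by CK⁰_{x_n}(p) = Σ_{j=0}^{⌊k/2⌋} (−1)^j x_n^{2j} Δ_{[n−1]}^j p / (2^{2j} j! (μ_n+½)^{(j)}) is a linear isomorphism onto H_k^+(ℝ^n), and the map CK¹_{x_n} : P_{k−1}(ℝ^{n−1}) → ℝ[x_1,…,x_n] given by CK¹_{x_n}(p) = Σ_{j=0}^{⌊(k-1)/2⌋} (−1)^j x_n^{2j+1} Δ_{[n−1]}^j p / (2^{2j} j! (μ_n+3/2)^{(j)}) is a linear isomorphism onto H_k^−(ℝ^n). -/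
open MvPolynomial Finset

/-!
Write a polynomial as `Σ_m x_e^m p_m` with every `p_m = varCoeff e m p` free of `x_e`. Since
`T_e² x_e^m = c_m c_{m-1} x_e^{m-2}` (with `c_m = dunklCoeff μ_e m`) while the other `T_i` commute
with multiplication by `x_e`, harmonicity is the recursion
`Δ_{[n]∖{e}} p_m + c_{m+1} c_{m+2} p_{m+2} = 0`. For `m = 2j + ε` the constant is
`4 (j + 1) (j + ν)` with `ν = μ_e + 1/2 + ε`, which never vanishes. Hence a harmonic of parity
`(-1)^ε` in `x_e` is determined by `p_ε`, and solving the recursion from `p_ε = q` yields the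
Cauchy–Kovalevskaia series, which terminates because `q` is homogeneous.
-/

noncomputable section

variable {n : ℕ}

lemma mem_supported_ne_iff {σ R : Type*} [CommSemiring R] (e : σ) (q : MvPolynomial σ R) :
    q ∈ supported R {i | i ≠ e} ↔ ∀ d : σ →₀ ℕ, d e ≠ 0 → coeff d q = 0 := by
  simp only [mem_supported, Set.subset_def, Finset.mem_coe, mem_vars_iff_mem_support,
    Set.mem_ofPred_eq, Finsupp.mem_support_iff, mem_support_iff]
  constructor
  · intro h d hd
    by_contra hq
    exact h e ⟨d, hq, hd⟩ rfl
  · rintro h i ⟨d, hq, hd⟩ rfl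
    exact hq (h d hd)

lemma isHomogeneous_iff_degree {σ R : Type*} [CommSemiring R] (p : MvPolynomial σ R) (m : ℕ) :
    p.IsHomogeneous m ↔ ∀ d : σ →₀ ℕ, coeff d p ≠ 0 → d.degree = m := by
  simp only [IsHomogeneous, IsWeightedHomogeneous, Finsupp.degree_eq_weight_one, Pi.one_def]

lemma coeff_divXop (i : Fin n) (p : MvPolynomial (Fin n) ℝ) (d : Fin n →₀ ℕ) :
    coeff d (divXop i p) = coeff (d + Finsupp.single i 1) p := by
  rw [divXop, LinearMap.coe_mk, AddHom.coe_mk, coeff_divMonomial, add_comm]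

lemma coeff_pow_divXop (e : Fin n) (m : ℕ) (p : MvPolynomial (Fin n) ℝ) (d : Fin n →₀ ℕ) :
    coeff d ((divXop e ^ m) p) = coeff (d + Finsupp.single e m) p := by
  induction m generalizing d with
  | zero => simp
  | succ m ih =>
    rw [pow_succ', Module.End.mul_apply, coeff_divXop, ih, add_assoc, ← Finsupp.single_add,
      add_comm 1 m]

lemma reflOp_apply (i : Fin n) (p : MvPolynomial (Fin n) ℝ) :
    reflOp i p = aeval (fun j : Fin n => if j = i then -X i else X j) p := rfl

lemma coeff_reflOp (i : Fin n) (p : MvPolynomial (Fin n) ℝ) (d : Fin n →₀ ℕ) :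
    coeff d (reflOp i p) = (-1 : ℝ) ^ d i * coeff d p := by
  induction p using MvPolynomial.induction_on generalizing d with
  | C a =>
    rw [reflOp_apply, aeval_C, algebraMap_eq, coeff_C]
    split_ifs with h
    · simp [← h]
    · rw [mul_zero]
  | add p q hp hq => simp only [map_add, coeff_add, hp, hq]; ring
  | mul_X p j hp =>
    rw [reflOp_apply, map_mul, aeval_X, ← reflOp_apply]
    by_cases hj : j = i
    · subst hj
      rw [if_pos rfl, mul_neg, coeff_neg, coeff_mul_X', coeff_mul_X']
      split_ifs with h
      · have hd : d j ≠ 0 := Finsupp.mem_support_iff.mp h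
        obtain ⟨t, ht⟩ := Nat.exists_eq_succ_of_ne_zero hd
        rw [hp, Finsupp.tsub_apply, Finsupp.single_eq_same, ht, pow_succ]
        simp
      · simp
    · rw [if_neg hj, coeff_mul_X', coeff_mul_X']
      split_ifs
      · rw [hp, Finsupp.tsub_apply, Finsupp.single_eq_of_ne (Ne.symm hj), tsub_zero]
      · simp

lemma reflOp_reflOp (i : Fin n) (p : MvPolynomial (Fin n) ℝ) : reflOp i (reflOp i p) = p := by
  ext d
  rw [coeff_reflOp, coeff_reflOp, ← mul_assoc, ← pow_add, Even.neg_one_pow ⟨d i, rfl⟩, one_mul]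

/-- `T_i (x_i ^ m) = dunklCoeff μ_i m • x_i ^ (m - 1)`. -/
def dunklCoeff (a : ℝ) (m : ℕ) : ℝ := m + a * (1 - (-1) ^ m)

lemma coeff_dunklT (μ : Fin n → ℝ) (i : Fin n) (p : MvPolynomial (Fin n) ℝ) (d : Fin n →₀ ℕ) :
    coeff d (dunklT μ i p) = dunklCoeff (μ i) (d i + 1) * coeff (d + Finsupp.single i 1) p := by
  have hT : dunklT μ i p = pderiv i p + μ i • divXop i (p - reflOp i p) := rfl
  rw [hT, coeff_add, coeff_smul, coeff_pderiv, coeff_divXop, coeff_sub, coeff_reflOp,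
    Finsupp.add_apply, Finsupp.single_eq_same, dunklCoeff, smul_eq_mul]
  push_cast
  ring

lemma coeff_dunklT_sq (μ : Fin n → ℝ) (i : Fin n) (p : MvPolynomial (Fin n) ℝ) (d : Fin n →₀ ℕ) :
    coeff d ((dunklT μ i ^ 2) p) =
      dunklCoeff (μ i) (d i + 1) * dunklCoeff (μ i) (d i + 2) *
        coeff (d + Finsupp.single i 2) p := by
  rw [sq, Module.End.mul_apply, coeff_dunklT, coeff_dunklT, Finsupp.add_apply,
    Finsupp.single_eq_same, add_assoc (d i), add_assoc d, ← Finsupp.single_add, mul_assoc]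

lemma dunklCoeff_mul_dunklCoeff {ε : ℕ} (hε : ε ≤ 1) (a : ℝ) (j : ℕ) :
    dunklCoeff a (2 * j + ε + 1) * dunklCoeff a (2 * j + ε + 2) =
      4 * (j + 1) * (j + (a + 1 / 2 + ε)) := by
  interval_cases ε <;>
  · simp only [dunklCoeff, pow_add, pow_mul, neg_one_sq, one_pow, one_mul, pow_zero, pow_one]
    push_cast
    ring

/-- The coefficient of `x_e ^ m` when `p` is viewed as a polynomial in `x_e` over the remaining
variables. -/
def varCoeff (e : Fin n) (m : ℕ) : Module.End ℝ (MvPolynomial (Fin n) ℝ) :=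
  weightedHomogeneousComponent (Pi.single e 1) 0 ∘ₗ divXop e ^ m

lemma coeff_varCoeff (e : Fin n) (m : ℕ) (p : MvPolynomial (Fin n) ℝ) (d : Fin n →₀ ℕ) :
    coeff d (varCoeff e m p) = if d e = 0 then coeff (d + Finsupp.single e m) p else 0 := by
  rw [varCoeff, LinearMap.comp_apply, coeff_weightedHomogeneousComponent,
    Finsupp.weight_single_one_apply, coeff_pow_divXop]

lemma varCoeff_mem_supported (e : Fin n) (m : ℕ) (p : MvPolynomial (Fin n) ℝ) :
    varCoeff e m p ∈ supported ℝ {i | i ≠ e} :=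
  (mem_supported_ne_iff e _).mpr fun d hd => by rw [coeff_varCoeff, if_neg hd]

lemma varCoeff_reflOp (e : Fin n) (m : ℕ) (p : MvPolynomial (Fin n) ℝ) :
    varCoeff e m (reflOp e p) = (-1 : ℝ) ^ m • varCoeff e m p := by
  ext d
  rw [coeff_smul, coeff_varCoeff, coeff_varCoeff, smul_eq_mul]
  split_ifs with hd
  · rw [coeff_reflOp, Finsupp.add_apply, hd, Finsupp.single_eq_same, zero_add]
  · rw [mul_zero]

lemma varCoeff_dunklT_sq_self (μ : Fin n → ℝ) (e : Fin n) (m : ℕ) (p : MvPolynomial (Fin n) ℝ) :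
    varCoeff e m ((dunklT μ e ^ 2) p) =
      (dunklCoeff (μ e) (m + 1) * dunklCoeff (μ e) (m + 2)) • varCoeff e (m + 2) p := by
  ext d
  rw [coeff_smul, coeff_varCoeff, coeff_varCoeff, smul_eq_mul]
  split_ifs with hd
  · rw [coeff_dunklT_sq, Finsupp.add_apply, hd, Finsupp.single_eq_same, zero_add, add_assoc,
      ← Finsupp.single_add]
  · rw [mul_zero]

lemma varCoeff_dunklT_sq_of_ne (μ : Fin n → ℝ) {e i : Fin n} (hi : i ≠ e) (m : ℕ)
    (p : MvPolynomial (Fin n) ℝ) :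
    varCoeff e m ((dunklT μ i ^ 2) p) = (dunklT μ i ^ 2) (varCoeff e m p) := by
  ext d
  have hde : (d + Finsupp.single i 2 : Fin n →₀ ℕ) e = d e := by simp [hi]
  rw [coeff_varCoeff, coeff_dunklT_sq, coeff_dunklT_sq, coeff_varCoeff, hde]
  split_ifs
  · rw [Finsupp.add_apply, Finsupp.single_eq_of_ne hi, add_zero, add_right_comm]
  · rw [mul_zero]

lemma varCoeff_lapD_univ (μ : Fin n → ℝ) (e : Fin n) (m : ℕ) (p : MvPolynomial (Fin n) ℝ) :
    varCoeff e m (lapD μ univ p) =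
      lapD μ (univ.erase e) (varCoeff e m p) +
        (dunklCoeff (μ e) (m + 1) * dunklCoeff (μ e) (m + 2)) • varCoeff e (m + 2) p := by
  rw [lapD, ← add_sum_erase _ _ (mem_univ e), LinearMap.add_apply, map_add,
    varCoeff_dunklT_sq_self, add_comm, lapD, LinearMap.sum_apply, LinearMap.sum_apply, map_sum]
  congr 1
  exact sum_congr rfl fun i hi => varCoeff_dunklT_sq_of_ne μ (ne_of_mem_erase hi) m p

lemma eq_zero_of_forall_varCoeff_eq_zero (e : Fin n) {p : MvPolynomial (Fin n) ℝ}
    (h : ∀ m, varCoeff e m p = 0) : p = 0 := by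
  ext d
  have hd := congr_arg (coeff (d.erase e)) (h (d e))
  rwa [coeff_varCoeff, if_pos (Finsupp.erase_same), add_comm, Finsupp.single_add_erase,
    coeff_zero] at hd

lemma varCoeff_X_pow_mul (e : Fin n) (s m : ℕ) {q : MvPolynomial (Fin n) ℝ}
    (hq : q ∈ supported ℝ {i | i ≠ e}) :
    varCoeff e m (X e ^ s * q) = if s = m then q else 0 := by
  rw [mem_supported_ne_iff] at hq
  ext d
  simp only [coeff_varCoeff, X_pow_eq_monomial, coeff_monomial_mul', Finsupp.single_le_iff,
    apply_ite (coeff d), coeff_zero, one_mul]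
  by_cases hd : d e = 0
  · simp only [hd, if_true, Finsupp.add_apply, Finsupp.single_eq_same, zero_add]
    split_ifs with hsm hsm' hsm'
    · rw [hsm', add_tsub_cancel_right]
    · refine hq _ ?_
      rw [Finsupp.tsub_apply, Finsupp.add_apply, hd, Finsupp.single_eq_same,
        Finsupp.single_eq_same]
      omega
    · omega
    · rfl
  · simp only [hd, if_false]
    split_ifs
    · exact (hq d hd).symm
    · rfl

lemma coeff_lapD (μ : Fin n → ℝ) (B : Finset (Fin n)) (p : MvPolynomial (Fin n) ℝ)
    (d : Fin n →₀ ℕ) :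
    coeff d (lapD μ B p) =
      ∑ i ∈ B, dunklCoeff (μ i) (d i + 1) * dunklCoeff (μ i) (d i + 2) *
        coeff (d + Finsupp.single i 2) p := by
  simp only [lapD, LinearMap.sum_apply, coeff_sum, coeff_dunklT_sq]

lemma lapD_mem_supported (μ : Fin n → ℝ) {e : Fin n} {B : Finset (Fin n)} (hB : e ∉ B)
    {q : MvPolynomial (Fin n) ℝ} (hq : q ∈ supported ℝ {i | i ≠ e}) :
    lapD μ B q ∈ supported ℝ {i | i ≠ e} := by
  rw [mem_supported_ne_iff] at hq ⊢
  intro d hd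
  rw [coeff_lapD]
  refine sum_eq_zero fun i hi => ?_
  rw [hq _ (by simpa [show i ≠ e from fun h => hB (h ▸ hi)] using hd), mul_zero]

lemma pow_lapD_mem_supported (μ : Fin n → ℝ) {e : Fin n} {q : MvPolynomial (Fin n) ℝ}
    (hq : q ∈ supported ℝ {i | i ≠ e}) (j : ℕ) :
    (lapD μ (univ.erase e) ^ j) q ∈ supported ℝ {i | i ≠ e} := by
  induction j with
  | zero => exact hq
  | succ j ih =>
    rw [pow_succ', Module.End.mul_apply]
    exact lapD_mem_supported μ (notMem_erase e _) ih

lemma lapD_reflOp (μ : Fin n → ℝ) (B : Finset (Fin n)) (e : Fin n) (p : MvPolynomial (Fin n) ℝ) :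
    lapD μ B (reflOp e p) = reflOp e (lapD μ B p) := by
  ext d
  simp only [coeff_lapD, coeff_reflOp, mul_sum, Finsupp.add_apply]
  refine sum_congr rfl fun i _ => ?_
  have hpar : (-1 : ℝ) ^ (d e + Finsupp.single i 2 e) = (-1) ^ d e := by
    rw [pow_add, Finsupp.single_apply]
    split_ifs <;> simp
  rw [hpar]
  ring

lemma reflOp_eq_self_of_mem_supported {e : Fin n} {q : MvPolynomial (Fin n) ℝ}
    (hq : q ∈ supported ℝ {i | i ≠ e}) : reflOp e q = q := by
  rw [mem_supported_ne_iff] at hq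
  ext d
  rw [coeff_reflOp]
  by_cases hd : d e = 0
  · rw [hd, pow_zero, one_mul]
  · rw [hq d hd, mul_zero]

lemma reflOp_X_pow_mul (e : Fin n) (s : ℕ) (p : MvPolynomial (Fin n) ℝ) :
    reflOp e (X e ^ s * p) = (-1 : ℝ) ^ s • (X e ^ s * reflOp e p) := by
  rw [reflOp_apply, map_mul, map_pow, aeval_X, if_pos rfl, ← reflOp_apply, neg_pow,
    smul_eq_C_mul, map_pow, map_neg, map_one, mul_assoc]

lemma isHomogeneous_reflOp {e : Fin n} {m : ℕ} {p : MvPolynomial (Fin n) ℝ}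
    (hp : p.IsHomogeneous m) : (reflOp e p).IsHomogeneous m := by
  intro d hd
  rw [coeff_reflOp] at hd
  exact hp (right_ne_zero_of_mul hd)

lemma degree_add_two_of_coeff_lapD_ne_zero (μ : Fin n → ℝ) (B : Finset (Fin n)) {m : ℕ}
    {p : MvPolynomial (Fin n) ℝ} (hp : p.IsHomogeneous m) {d : Fin n →₀ ℕ}
    (hd : coeff d (lapD μ B p) ≠ 0) : d.degree + 2 = m := by
  rw [coeff_lapD] at hd
  obtain ⟨i, -, hi⟩ := exists_ne_zero_of_sum_ne_zero hd
  simpa using (isHomogeneous_iff_degree p m).mp hp _ (right_ne_zero_of_mul hi)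

lemma isHomogeneous_lapD (μ : Fin n → ℝ) (B : Finset (Fin n)) {m : ℕ}
    {p : MvPolynomial (Fin n) ℝ} (hp : p.IsHomogeneous (m + 2)) :
    (lapD μ B p).IsHomogeneous m :=
  (isHomogeneous_iff_degree _ m).mpr fun _ hd =>
    Nat.add_right_cancel (degree_add_two_of_coeff_lapD_ne_zero μ B hp hd)

lemma lapD_eq_zero_of_isHomogeneous (μ : Fin n → ℝ) (B : Finset (Fin n)) {m : ℕ}
    {p : MvPolynomial (Fin n) ℝ} (hp : p.IsHomogeneous m) (hm : m < 2) : lapD μ B p = 0 := by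
  ext d
  by_contra hd
  have := degree_add_two_of_coeff_lapD_ne_zero μ B hp hd
  omega

lemma isHomogeneous_pow_lapD (μ : Fin n → ℝ) (B : Finset (Fin n)) {m j : ℕ}
    {p : MvPolynomial (Fin n) ℝ} (hp : p.IsHomogeneous (m + 2 * j)) :
    ((lapD μ B ^ j) p).IsHomogeneous m := by
  induction j generalizing m with
  | zero => exact hp
  | succ j ih =>
    rw [pow_succ', Module.End.mul_apply]
    exact isHomogeneous_lapD μ B (ih (by rwa [mul_add_one, ← add_assoc, add_right_comm] at hp))

lemma pow_lapD_eq_zero_of_isHomogeneous (μ : Fin n → ℝ) (B : Finset (Fin n)) {m j : ℕ}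
    {p : MvPolynomial (Fin n) ℝ} (hp : p.IsHomogeneous m) (hm : m < 2 * j) :
    (lapD μ B ^ j) p = 0 := by
  obtain ⟨t, rfl⟩ : ∃ t, j = t + (m / 2 + 1) := ⟨j - (m / 2 + 1), by omega⟩
  rw [pow_add, Module.End.mul_apply, pow_succ', Module.End.mul_apply,
    lapD_eq_zero_of_isHomogeneous μ B (m := m % 2) ?_ (Nat.mod_lt m two_pos), map_zero]
  exact isHomogeneous_pow_lapD μ B (by rwa [Nat.mod_add_div])

lemma isHomogeneous_varCoeff (e : Fin n) {t m : ℕ} {p : MvPolynomial (Fin n) ℝ}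
    (hp : p.IsHomogeneous (t + m)) : (varCoeff e m p).IsHomogeneous t := by
  rw [isHomogeneous_iff_degree] at hp ⊢
  intro d hd
  rw [coeff_varCoeff] at hd
  split_ifs at hd
  · simpa using hp _ hd
  · exact absurd rfl hd

def ckOp (μ : Fin n → ℝ) (e : Fin n) (a : ℕ → ℝ) (ε K : ℕ) :
    Module.End ℝ (MvPolynomial (Fin n) ℝ) :=
  ∑ j ∈ range (K + 1), a j • (LinearMap.mulLeft ℝ (X e ^ (2 * j + ε)) * lapD μ (univ.erase e) ^ j)

section ckOp

variable (μ : Fin n → ℝ) (e : Fin n) (a : ℕ → ℝ) (ε K : ℕ)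

lemma ckOp_apply (q : MvPolynomial (Fin n) ℝ) :
    ckOp μ e a ε K q =
      ∑ j ∈ range (K + 1), a j • (X e ^ (2 * j + ε) * (lapD μ (univ.erase e) ^ j) q) := by
  simp only [ckOp, LinearMap.sum_apply, LinearMap.smul_apply, Module.End.mul_apply,
    LinearMap.mulLeft_apply]

variable {μ e a ε K} {q : MvPolynomial (Fin n) ℝ}

lemma varCoeff_ckOp (hq : q ∈ supported ℝ {i | i ≠ e}) (m : ℕ) :
    varCoeff e m (ckOp μ e a ε K q) =
      ∑ j ∈ range (K + 1), if 2 * j + ε = m then a j • (lapD μ (univ.erase e) ^ j) q else 0 := by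
  rw [ckOp_apply, map_sum]
  refine sum_congr rfl fun j _ => ?_
  rw [map_smul, varCoeff_X_pow_mul e _ _ (pow_lapD_mem_supported μ hq j), smul_ite, smul_zero]

lemma varCoeff_ckOp_two_mul_add (hq : q ∈ supported ℝ {i | i ≠ e}) (j : ℕ) :
    varCoeff e (2 * j + ε) (ckOp μ e a ε K q) =
      if j ≤ K then a j • (lapD μ (univ.erase e) ^ j) q else 0 := by
  rw [varCoeff_ckOp hq]
  simp only [add_left_inj, mul_right_inj' two_ne_zero, sum_ite_eq', mem_range, Nat.lt_succ_iff]

lemma varCoeff_ckOp_of_forall_ne (hq : q ∈ supported ℝ {i | i ≠ e}) {m : ℕ}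
    (hm : ∀ j, 2 * j + ε ≠ m) :
    varCoeff e m (ckOp μ e a ε K q) = 0 := by
  rw [varCoeff_ckOp hq]
  exact sum_eq_zero fun j _ => if_neg (hm j)

lemma reflOp_ckOp (hq : q ∈ supported ℝ {i | i ≠ e}) :
    reflOp e (ckOp μ e a ε K q) = (-1 : ℝ) ^ ε • ckOp μ e a ε K q := by
  rw [ckOp_apply, map_sum, smul_sum]
  refine sum_congr rfl fun j _ => ?_
  rw [map_smul, reflOp_X_pow_mul,
    reflOp_eq_self_of_mem_supported (pow_lapD_mem_supported μ hq j), smul_comm, pow_add, pow_mul,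
    neg_one_sq, one_pow, one_mul]

end ckOp

lemma isHomogeneous_ckOp (μ : Fin n → ℝ) (e : Fin n) (a : ℕ → ℝ) (ε : ℕ) {k K : ℕ}
    (hK : 2 * K ≤ k) {q : MvPolynomial (Fin n) ℝ} (hq : q.IsHomogeneous k) :
    (ckOp μ e a ε K q).IsHomogeneous (k + ε) := by
  rw [ckOp_apply, ← mem_homogeneousSubmodule]
  refine Submodule.sum_mem _ fun j hj => Submodule.smul_mem _ _ ?_
  have hj : 2 * j ≤ k := by have := mem_range.mp hj; omega
  have hD := isHomogeneous_pow_lapD μ (univ.erase e) (m := k - 2 * j) (j := j)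
    (by rwa [Nat.sub_add_cancel hj])
  rw [mem_homogeneousSubmodule, show k + ε = 2 * j + ε + (k - 2 * j) by omega]
  exact (isHomogeneous_X_pow e _).mul hD

def ckCoeff (ν : ℝ) (j : ℕ) : ℝ :=
  (-1) ^ j / (2 ^ (2 * j) * j.factorial * (ascPochhammer ℝ j).eval ν)

lemma ckCoeff_zero (ν : ℝ) : ckCoeff ν 0 = 1 := by simp [ckCoeff]

lemma ckCoeff_add_mul_ckCoeff_succ {ν : ℝ} (hν : 0 < ν) (j : ℕ) :
    ckCoeff ν j + 4 * (j + 1) * (j + ν) * ckCoeff ν (j + 1) = 0 := by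
  have hp : (ascPochhammer ℝ j).eval ν ≠ 0 := (ascPochhammer_pos j ν hν).ne'
  have hν' : ν + j ≠ 0 := by positivity
  rw [ckCoeff, ckCoeff, ascPochhammer_succ_eval, Nat.factorial_succ, Nat.cast_mul, pow_succ,
    mul_add_one 2 j, pow_add]
  field_simp
  push_cast
  ring

lemma lapD_univ_ckOp_eq_zero (μ : Fin n → ℝ) (e : Fin n) {ε k : ℕ} (hε : ε ≤ 1) {ν : ℝ}
    (hν : ν = μ e + 1 / 2 + ε) (hν0 : 0 < ν) {q : MvPolynomial (Fin n) ℝ}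
    (hq : q ∈ supported ℝ {i | i ≠ e}) (hqk : q.IsHomogeneous k) :
    lapD μ univ (ckOp μ e (ckCoeff ν) ε (k / 2) q) = 0 := by
  apply eq_zero_of_forall_varCoeff_eq_zero e
  intro m
  rw [varCoeff_lapD_univ]
  by_cases hm : ∃ i, 2 * i + ε = m
  · obtain ⟨i, rfl⟩ := hm
    rw [dunklCoeff_mul_dunklCoeff hε, ← hν, show 2 * i + ε + 2 = 2 * (i + 1) + ε by ring,
      varCoeff_ckOp_two_mul_add hq, varCoeff_ckOp_two_mul_add hq]
    rcases lt_trichotomy i (k / 2) with hi | rfl | hi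
    · rw [if_pos hi.le, if_pos (show i + 1 ≤ k / 2 by omega), map_smul, ← Module.End.mul_apply,
        ← pow_succ', smul_smul, ← add_smul, ckCoeff_add_mul_ckCoeff_succ hν0, zero_smul]
    · rw [if_pos le_rfl, if_neg (by omega), smul_zero, add_zero, map_smul, ← Module.End.mul_apply,
        ← pow_succ', pow_lapD_eq_zero_of_isHomogeneous μ _ hqk (by omega), smul_zero]
    · rw [if_neg (by omega), if_neg (by omega), map_zero, smul_zero, add_zero]
  · push Not at hm
    rw [varCoeff_ckOp_of_forall_ne hq hm,
      varCoeff_ckOp_of_forall_ne hq (fun j hj => hm (j - 1) (by omega)), map_zero, smul_zero,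
      add_zero]

lemma eq_zero_of_harmonic_of_varCoeff_eq_zero (μ : Fin n → ℝ) (e : Fin n) {ε : ℕ} (hε : ε ≤ 1)
    (hμ : 0 < μ e + 1 / 2 + ε) {g : MvPolynomial (Fin n) ℝ} (hg : lapD μ univ g = 0)
    (hr : reflOp e g = (-1 : ℝ) ^ ε • g) (hε0 : varCoeff e ε g = 0) : g = 0 := by
  apply eq_zero_of_forall_varCoeff_eq_zero e
  intro m
  by_cases hm : ∃ j, 2 * j + ε = m
  · obtain ⟨j, rfl⟩ := hm
    induction j with
    | zero => simpa using hε0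
    | succ j ih =>
      have h := congr_arg (varCoeff e (2 * j + ε)) hg
      rw [varCoeff_lapD_univ, ih, map_zero, zero_add, map_zero, dunklCoeff_mul_dunklCoeff hε,
        smul_eq_zero] at h
      rw [show 2 * (j + 1) + ε = 2 * j + ε + 2 by ring]
      exact h.resolve_left (by positivity)
  · push Not at hm
    have hmod : m % 2 ≠ ε := fun h => hm (m / 2) (by omega)
    have hpar : (-1 : ℝ) ^ m ≠ (-1) ^ ε := by
      rw [neg_one_pow_eq_pow_mod_two]
      rcases Nat.mod_two_eq_zero_or_one m with h | h <;> interval_cases ε <;> simp_all <;> norm_num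
    have h := congr_arg (varCoeff e m) hr
    rw [varCoeff_reflOp, map_smul, ← sub_eq_zero, ← sub_smul, smul_eq_zero] at h
    exact h.resolve_left (sub_ne_zero.mpr hpar)

lemma varCoeff_ckOp_ckCoeff (μ : Fin n → ℝ) (e : Fin n) (ν : ℝ) (ε K : ℕ)
    {q : MvPolynomial (Fin n) ℝ} (hq : q ∈ supported ℝ {i | i ≠ e}) :
    varCoeff e ε (ckOp μ e (ckCoeff ν) ε K q) = q := by
  simpa [ckCoeff_zero] using varCoeff_ckOp_two_mul_add (a := ckCoeff ν) (K := K) hq 0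

def dunklHarmonics (μ : Fin n → ℝ) (d : ℕ) : Submodule ℝ (MvPolynomial (Fin n) ℝ) :=
  homogeneousSubmodule (Fin n) ℝ d ⊓ LinearMap.ker (lapD μ univ)

lemma reflOp_mem_dunklHarmonics {μ : Fin n → ℝ} (e : Fin n) {d : ℕ} {p : MvPolynomial (Fin n) ℝ}
    (hp : p ∈ dunklHarmonics μ d) : reflOp e p ∈ dunklHarmonics μ d :=
  ⟨isHomogeneous_reflOp hp.1, by
    rw [SetLike.mem_coe, LinearMap.mem_ker, lapD_reflOp, LinearMap.mem_ker.mp hp.2, map_zero]⟩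

lemma coe_map_dunklHarmonics (μ : Fin n → ℝ) (e : Fin n) (ε d : ℕ) :
    (Submodule.map ((1 / 2 : ℝ) • (1 + (-1 : ℝ) ^ ε • reflOp e)) (dunklHarmonics μ d) :
        Set (MvPolynomial (Fin n) ℝ)) =
      {h | h ∈ dunklHarmonics μ d ∧ reflOp e h = (-1 : ℝ) ^ ε • h} := by
  have hsq : ((-1 : ℝ) ^ ε) * (-1) ^ ε = 1 := by rw [← mul_pow]; norm_num
  ext h
  simp only [Submodule.map_coe, Set.mem_image, SetLike.mem_coe, Set.mem_ofPred_eq,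
    LinearMap.smul_apply, LinearMap.add_apply, Module.End.one_apply]
  constructor
  · rintro ⟨p, hp, rfl⟩
    refine ⟨Submodule.smul_mem _ _ (Submodule.add_mem _ hp
      (Submodule.smul_mem _ _ (reflOp_mem_dunklHarmonics e hp))), ?_⟩
    rw [map_smul, map_add, map_smul, reflOp_reflOp, smul_comm _ (1 / 2 : ℝ), smul_add _ p,
      smul_smul _ _ (reflOp e p), hsq, one_smul, add_comm]
  · rintro ⟨hh, hr⟩
    refine ⟨h, hh, ?_⟩
    rw [hr, smul_smul, hsq, one_smul, ← two_smul ℝ h, smul_smul]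
    norm_num

theorem ckOp_bijOn (μ : Fin n → ℝ) (e : Fin n) {ε : ℕ} (hε : ε ≤ 1) (k : ℕ) {ν : ℝ}
    (hν : ν = μ e + 1 / 2 + ε) (hν0 : 0 < ν) :
    Set.BijOn (ckOp μ e (ckCoeff ν) ε (k / 2))
      (homogeneousSubmodule (Fin n) ℝ k ⊓ Subalgebra.toSubmodule (supported ℝ {i | i ≠ e}) :
        Submodule ℝ (MvPolynomial (Fin n) ℝ))
      {h | h ∈ dunklHarmonics μ (k + ε) ∧ reflOp e h = (-1 : ℝ) ^ ε • h} := by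
  refine ⟨?mapsTo, ?injOn, ?surjOn⟩
  case mapsTo =>
    rintro q ⟨hqk, hq⟩
    exact ⟨⟨isHomogeneous_ckOp μ e _ ε (by omega) hqk,
      lapD_univ_ckOp_eq_zero μ e hε hν hν0 hq hqk⟩, reflOp_ckOp hq⟩
  case injOn =>
    intro q hq q' hq' h
    rw [← varCoeff_ckOp_ckCoeff μ e ν ε (k / 2) hq.2, h, varCoeff_ckOp_ckCoeff μ e ν ε _ hq'.2]
  case surjOn =>
    rintro h ⟨⟨hhk, hhΔ⟩, hhr⟩
    have hq : varCoeff e ε h ∈ supported ℝ {i | i ≠ e} := varCoeff_mem_supported e ε h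
    refine ⟨varCoeff e ε h, ⟨isHomogeneous_varCoeff e hhk, hq⟩, ?_⟩
    rw [← sub_eq_zero]
    apply eq_zero_of_harmonic_of_varCoeff_eq_zero μ e hε (hν ▸ hν0)
    · rw [map_sub, lapD_univ_ckOp_eq_zero μ e hε hν hν0 hq (isHomogeneous_varCoeff e hhk),
        LinearMap.mem_ker.mp hhΔ, sub_zero]
    · rw [map_sub, reflOp_ckOp hq, hhr, smul_sub]
    · rw [map_sub, varCoeff_ckOp_ckCoeff μ e ν ε _ hq, sub_self]

end

/-- Cauchy–Kovalevskaia isomorphisms: `CK⁰_{x_n}` restricts to a bijection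
from `P_k(ℝ^{n−1})` onto `H_k^+(ℝ^n)`, and `CK¹_{x_n}` restricts to a bijection from
`P_k(ℝ^{n−1})` onto `H_{k+1}^−(ℝ^n)` (the latter stated with target degree `k+1`, so that
over all `k` this is exactly the claim for `P_{k−1} → H_k^−`).  Both maps are linear by
construction, so these are linear isomorphisms onto the indicated spaces. -/
theorem ck_isomorphisms {n : ℕ} (hn : 2 ≤ n) (μ : Fin n → ℝ) (hμ : ∀ i, 0 < μ i) (k : ℕ) :
    let e : Fin n := ⟨n - 1, by omega⟩
    -- homogeneous polynomials of degree `d` in the variables `x_1, …, x_{n−1}` only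
    let P : ℕ → Submodule ℝ (MvPolynomial (Fin n) ℝ) := fun d =>
      homogeneousSubmodule (Fin n) ℝ d ⊓
        Subalgebra.toSubmodule (MvPolynomial.supported ℝ {i : Fin n | i ≠ e})
    -- degree-`d` Dunkl harmonics
    let H : ℕ → Submodule ℝ (MvPolynomial (Fin n) ℝ) := fun d =>
      homogeneousSubmodule (Fin n) ℝ d ⊓ LinearMap.ker (lapD μ Finset.univ)
    -- even/odd parts in `x_n`
    let Hplus : Submodule ℝ (MvPolynomial (Fin n) ℝ) :=
      Submodule.map ((1 / 2 : ℝ) • (1 + reflOp e)) (H k)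
    let Hminus : Submodule ℝ (MvPolynomial (Fin n) ℝ) :=
      Submodule.map ((1 / 2 : ℝ) • (1 - reflOp e)) (H (k + 1))
    -- `Δ_{[n−1]}`
    let D : Module.End ℝ (MvPolynomial (Fin n) ℝ) := lapD μ (Finset.univ.erase e)
    let CK0 : Module.End ℝ (MvPolynomial (Fin n) ℝ) :=
      ∑ j ∈ Finset.range (k / 2 + 1),
        ((-1 : ℝ) ^ j / (2 ^ (2 * j) * (j.factorial : ℝ) *
            (ascPochhammer ℝ j).eval (μ e + 1 / 2))) •
          (LinearMap.mulLeft ℝ (X e ^ (2 * j)) * D ^ j)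
    let CK1 : Module.End ℝ (MvPolynomial (Fin n) ℝ) :=
      ∑ j ∈ Finset.range (k / 2 + 1),
        ((-1 : ℝ) ^ j / (2 ^ (2 * j) * (j.factorial : ℝ) *
            (ascPochhammer ℝ j).eval (μ e + 3 / 2))) •
          (LinearMap.mulLeft ℝ (X e ^ (2 * j + 1)) * D ^ j)
    Set.BijOn CK0 (P k : Set (MvPolynomial (Fin n) ℝ)) (Hplus : Set (MvPolynomial (Fin n) ℝ)) ∧
      Set.BijOn CK1 (P k : Set (MvPolynomial (Fin n) ℝ)) (Hminus : Set (MvPolynomial (Fin n) ℝ)) := by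
  intro e P H Hplus Hminus D CK0 CK1
  have hμe := hμ e
  have hodd : (1 : Module.End ℝ (MvPolynomial (Fin n) ℝ)) + (-1 : ℝ) ^ 1 • reflOp e =
      1 - reflOp e := by
    rw [pow_one, sub_eq_add_neg, ← neg_one_smul ℝ (reflOp e)]
  constructor
  · have h := ckOp_bijOn μ e zero_le_one k (ν := μ e + 1 / 2) (by simp) (by linarith)
    rwa [← coe_map_dunklHarmonics, pow_zero, one_smul] at h
  · have h := ckOp_bijOn μ e le_rfl k (ν := μ e + 3 / 2) (by push_cast; ring) (by linarith)
    rwa [← coe_map_dunklHarmonics, hodd] at h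
end
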